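/- (Uniform convergence of best L²(μ)-approximants) Let K ⊂ ℂ^N be a compact, polynomially convex, L-regular set and let μ be a finite positive Borel measure supported on K such that (K,μ) has the Bernstein–Markov property. Suppose f ∈ C(K) satisfies limsup_{n→∞} d_n(f,K)^{1/n} = ρ < 1, and for each n let p_n be a holomorphic polynomial of degree at most n minimizing ‖f − p‖_{L²(μ)} over all holomorphic polynomials p of degree at most n. Then limsup_{n→∞} ‖f − p_n‖_K^{1/n} = ρ. -/

import Mathlib

open Filter MeasureTheory

/-- Evaluation of a holomorphic polynomial in `N` complex variables at a point of `ℂ^N`. -/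
noncomputable def evalP {N : ℕ} (p : MvPolynomial (Fin N) ℂ)
    (z : EuclideanSpace ℂ (Fin N)) : ℂ :=
  MvPolynomial.eval (fun j => z j) p

/-- The supremum norm `‖g‖_K = sup_{z ∈ K} |g z|`. -/
noncomputable def supK {N : ℕ} (K : Set (EuclideanSpace ℂ (Fin N)))
    (g : EuclideanSpace ℂ (Fin N) → ℂ) : ℝ :=
  ⨆ z : K, ‖g z‖

/-- `d_n(f,K)`: distance from `f` to the holomorphic polynomials of degree at most `n`
in the supremum norm on `K`. -/
noncomputable def dnApprox {N : ℕ} (K : Set (EuclideanSpace ℂ (Fin N)))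
    (f : EuclideanSpace ℂ (Fin N) → ℂ) (n : ℕ) : ℝ :=
  ⨅ p : {p : MvPolynomial (Fin N) ℂ // p.totalDegree ≤ n},
    supK K (fun z => f z - evalP p.1 z)

/-- The (Siciak) extremal function
`V_K(z) = max(0, sup {(1/deg p) log |p(z)| : p nonconstant, ‖p‖_K ≤ 1})`. -/
noncomputable def VK {N : ℕ} (K : Set (EuclideanSpace ℂ (Fin N)))
    (z : EuclideanSpace ℂ (Fin N)) : ℝ :=
  max 0 (⨆ p : {p : MvPolynomial (Fin N) ℂ // 0 < p.totalDegree ∧ supK K (evalP p) ≤ 1},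
    ((p.1.totalDegree : ℝ))⁻¹ * Real.log (‖evalP p.1 z‖))

/-- The polynomial hull `K̂ = {z : |p(z)| ≤ ‖p‖_K for all holomorphic polynomials p}`. -/
noncomputable def polyHull {N : ℕ} (K : Set (EuclideanSpace ℂ (Fin N))) :
    Set (EuclideanSpace ℂ (Fin N)) :=
  {z | ∀ p : MvPolynomial (Fin N) ℂ, ‖evalP p z‖ ≤ supK K (evalP p)}

/-- The `L²(μ)` norm `(∫ |g|² dμ)^{1/2}`. -/
noncomputable def L2norm {N : ℕ} [MeasurableSpace (EuclideanSpace ℂ (Fin N))]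
    (μ : Measure (EuclideanSpace ℂ (Fin N))) (g : EuclideanSpace ℂ (Fin N) → ℂ) : ℝ :=
  Real.sqrt (∫ z, ‖g z‖ ^ 2 ∂μ)

open Topology

/- The best `L²(μ)` approximant `pₙ` is within a factor `1 + 2M√μ(K)(1+ε)ⁿ` of the best uniform
error `dₙ(f,K)`: for any `q` of degree `≤ n`, the Bernstein–Markov inequality applied to `q - pₙ`
bounds `‖q - pₙ‖_K` by `M(1+ε)ⁿ‖q - pₙ‖_{L²(μ)} ≤ 2M(1+ε)ⁿ‖f - q‖_{L²(μ)}`, and the `L²` norm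
is at most `√μ(K)` times the sup norm. Taking `n`-th roots, the factor contributes at most
`(1+ε)` to the `limsup`, and `ε` is arbitrary. -/

theorem limsup_le_of_forall_eventually_le_one_add_mul {b e : ℕ → ℝ}
    (hb : IsCoboundedUnder (· ≤ ·) atTop b) (he : IsBoundedUnder (· ≤ ·) atTop e)
    (h : ∀ ε > 0, ∀ᶠ n in atTop, b n ≤ (1 + ε) * e n) :
    limsup b atTop ≤ limsup e atTop := by
  have hle : ∀ ε > 0, limsup b atTop ≤ (1 + ε) * (limsup e atTop + ε) := fun ε hε =>
    limsup_le_of_le hb <| by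
      filter_upwards [h ε hε, eventually_lt_of_limsup_lt (lt_add_of_pos_right _ hε) he]
        with n hbn hen
      exact hbn.trans (by gcongr)
  have hlim : Tendsto (fun ε : ℝ => (1 + ε) * (limsup e atTop + ε)) (𝓝[>] 0)
      (𝓝 (limsup e atTop)) := by
    have hcont : Continuous fun ε : ℝ => (1 + ε) * (limsup e atTop + ε) := by fun_prop
    exact tendsto_nhdsWithin_of_tendsto_nhds (hcont.tendsto' 0 _ (by simp))
  exact ge_of_tendsto hlim (eventually_mem_nhdsWithin.mono hle)

theorem rpow_natCast_inv_le_max_one {x S : ℝ} (hx : 0 ≤ x) (hxS : x ≤ S) (n : ℕ) :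
    x ^ (n : ℝ)⁻¹ ≤ max 1 S := by
  rcases le_total x 1 with hx1 | hx1
  · exact (Real.rpow_le_one hx hx1 (by positivity)).trans (le_max_left _ _)
  · rcases Nat.eq_zero_or_pos n with rfl | hn
    · simp
    calc x ^ (n : ℝ)⁻¹ ≤ x ^ (1 : ℝ) :=
          Real.rpow_le_rpow_of_exponent_le hx1 (inv_le_one_of_one_le₀ (by exact_mod_cast hn))
      _ ≤ max 1 S := by rw [Real.rpow_one]; exact hxS.trans (le_max_right _ _)

theorem eventually_rpow_inv_le_of_le_geometric {a d : ℕ → ℝ} (ha : ∀ n, 0 ≤ a n)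
    (hd : ∀ n, 0 ≤ d n) {B c c' : ℝ} (hc : 0 ≤ c) (hcc' : c < c')
    (hgeom : ∀ n, a n ≤ B * c ^ n * d n) :
    ∀ᶠ n in atTop, a n ^ (n : ℝ)⁻¹ ≤ c' * d n ^ (n : ℝ)⁻¹ := by
  set B' := max B 1
  have hB' : 0 < B' := lt_max_of_lt_right one_pos
  have hroot : Tendsto (fun n : ℕ => B' ^ (n : ℝ)⁻¹ * c) atTop (𝓝 c) := by
    simpa using ((Real.continuousAt_const_rpow hB'.ne').tendsto.comp
      tendsto_inv_atTop_nhds_zero_nat).mul_const c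
  filter_upwards [hroot.eventually_le_const hcc', eventually_ne_atTop 0] with n hn hn0
  have hn0' : (n : ℝ) ≠ 0 := Nat.cast_ne_zero.mpr hn0
  calc a n ^ (n : ℝ)⁻¹ ≤ (B' * c ^ n * d n) ^ (n : ℝ)⁻¹ := by
        refine Real.rpow_le_rpow (ha n) ((hgeom n).trans ?_) (by positivity)
        have := hd n
        gcongr
        exact le_max_left _ _
    _ = B' ^ (n : ℝ)⁻¹ * c * d n ^ (n : ℝ)⁻¹ := by
        rw [Real.mul_rpow (by positivity) (hd n), Real.mul_rpow hB'.le (by positivity),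
          ← Real.rpow_natCast, ← Real.rpow_mul hc, mul_inv_cancel₀ hn0', Real.rpow_one]
    _ ≤ c' * d n ^ (n : ℝ)⁻¹ := by gcongr; exact Real.rpow_nonneg (hd n) _

theorem limsup_rpow_inv_eq_of_le_geometric {a d : ℕ → ℝ} (hd : ∀ n, 0 ≤ d n)
    (hda : ∀ n, d n ≤ a n) (hbdd : IsBoundedUnder (· ≤ ·) atTop fun n => d n ^ (n : ℝ)⁻¹)
    (hgeom : ∀ c > 1, ∃ B, ∀ n, a n ≤ B * c ^ n * d n) :
    limsup (fun n => a n ^ (n : ℝ)⁻¹) atTop = limsup (fun n => d n ^ (n : ℝ)⁻¹) atTop := by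
  have ha n : 0 ≤ a n := (hd n).trans (hda n)
  have hroot : ∀ c > 1, ∀ᶠ n in atTop, a n ^ (n : ℝ)⁻¹ ≤ c * d n ^ (n : ℝ)⁻¹ := by
    intro c hc
    obtain ⟨c₀, hc₀, hc₀c⟩ := exists_between hc
    obtain ⟨B, hB⟩ := hgeom c₀ hc₀
    exact eventually_rpow_inv_le_of_le_geometric ha hd (by linarith) hc₀c hB
  have hbdd_a : IsBoundedUnder (· ≤ ·) atTop fun n => a n ^ (n : ℝ)⁻¹ := by
    obtain ⟨D, hD⟩ := hbdd
    refine ⟨2 * D, eventually_map.mpr ?_⟩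
    filter_upwards [hroot 2 one_lt_two, eventually_map.mp hD] with n h2 hD
    linarith
  refine le_antisymm ?_ ?_
  · exact limsup_le_of_forall_eventually_le_one_add_mul
      (isCoboundedUnder_le_of_le atTop fun n => Real.rpow_nonneg (ha n) _) hbdd
      fun ε hε => hroot _ (by linarith)
  · exact limsup_le_limsup
      (Eventually.of_forall fun n => Real.rpow_le_rpow (hd n) (hda n) (by positivity))
      (isCoboundedUnder_le_of_le atTop fun n => Real.rpow_nonneg (hd n) _) hbdd_a

section PolynomialApproximation

variable {N : ℕ} {K : Set (EuclideanSpace ℂ (Fin N))} {f g h : EuclideanSpace ℂ (Fin N) → ℂ}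
  {n : ℕ}

theorem continuous_evalP (p : MvPolynomial (Fin N) ℂ) : Continuous (evalP p) :=
  (MvPolynomial.continuous_eval p).comp <|
    continuous_pi fun j => (EuclideanSpace.proj j : EuclideanSpace ℂ (Fin N) →L[ℂ] ℂ).continuous

@[simp]
theorem evalP_sub (p q : MvPolynomial (Fin N) ℂ) (z : EuclideanSpace ℂ (Fin N)) :
    evalP (p - q) z = evalP p z - evalP q z := by
  simp [evalP]

@[simp]
theorem evalP_zero (z : EuclideanSpace ℂ (Fin N)) : evalP 0 z = 0 := by
  simp [evalP]

theorem supK_nonneg (K : Set (EuclideanSpace ℂ (Fin N))) (g : EuclideanSpace ℂ (Fin N) → ℂ) :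
    0 ≤ supK K g :=
  Real.iSup_nonneg fun _ => norm_nonneg _

theorem norm_le_supK (hK : IsCompact K) (hg : ContinuousOn g K) {z} (hz : z ∈ K) :
    ‖g z‖ ≤ supK K g := by
  refine le_ciSup (f := fun z : K => ‖g z‖) ?_ ⟨z, hz⟩
  rw [← Set.image_eq_range (fun z => ‖g z‖) K]
  exact (hK.image_of_continuousOn (continuous_norm.comp_continuousOn hg)).bddAbove

theorem supK_add_le (hK : IsCompact K) (hg : ContinuousOn g K) (hh : ContinuousOn h K) :
    supK K (fun z => g z + h z) ≤ supK K g + supK K h :=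
  Real.iSup_le (fun z => (norm_add_le _ _).trans
      (add_le_add (norm_le_supK hK hg z.2) (norm_le_supK hK hh z.2)))
    (add_nonneg (supK_nonneg K g) (supK_nonneg K h))

theorem dnApprox_nonneg : 0 ≤ dnApprox K f n :=
  Real.iInf_nonneg fun _ => supK_nonneg K _

theorem dnApprox_le (f : EuclideanSpace ℂ (Fin N) → ℂ) {q : MvPolynomial (Fin N) ℂ}
    (hq : q.totalDegree ≤ n) : dnApprox K f n ≤ supK K (fun z => f z - evalP q z) :=
  ciInf_le ⟨0, by rintro _ ⟨q, rfl⟩; exact supK_nonneg K _⟩ (⟨q, hq⟩ : {q // q.totalDegree ≤ n})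

theorem dnApprox_le_supK : dnApprox K f n ≤ supK K f := by
  simpa using dnApprox_le (K := K) f (q := 0) (by simp)

theorem le_mul_dnApprox {S c : ℝ} (hc : 0 ≤ c)
    (h : ∀ q : MvPolynomial (Fin N) ℂ, q.totalDegree ≤ n →
      S ≤ c * supK K (fun z => f z - evalP q z)) :
    S ≤ c * dnApprox K f n := by
  have : Nonempty {q : MvPolynomial (Fin N) ℂ // q.totalDegree ≤ n} := ⟨⟨0, by simp⟩⟩
  rw [dnApprox, Real.mul_iInf_of_nonneg hc]
  exact le_ciInf fun q => h q.1 q.2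

variable [MeasurableSpace (EuclideanSpace ℂ (Fin N))] {μ : Measure (EuclideanSpace ℂ (Fin N))}

theorem L2norm_eq_toReal_eLpNorm (hg : MemLp g 2 μ) : L2norm μ g = (eLpNorm g 2 μ).toReal := by
  rw [hg.eLpNorm_eq_integral_rpow_norm two_ne_zero ENNReal.ofNat_ne_top,
    ENNReal.toReal_ofReal (by positivity)]
  simp [L2norm, Real.sqrt_eq_rpow]

theorem L2norm_sub_le (hg : MemLp g 2 μ) (hh : MemLp h 2 μ) :
    L2norm μ (g - h) ≤ L2norm μ g + L2norm μ h := by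
  rw [L2norm_eq_toReal_eLpNorm (hg.sub hh), L2norm_eq_toReal_eLpNorm hg,
    L2norm_eq_toReal_eLpNorm hh, ← ENNReal.toReal_add hg.eLpNorm_ne_top hh.eLpNorm_ne_top]
  exact ENNReal.toReal_mono (ENNReal.add_ne_top.mpr ⟨hg.eLpNorm_ne_top, hh.eLpNorm_ne_top⟩)
    (eLpNorm_sub_le hg.1 hh.1 one_le_two)

variable [IsFiniteMeasure μ]

theorem L2norm_le_sqrt_mul_supK (hK : IsCompact K) (hsupp : μ Kᶜ = 0) (hg : ContinuousOn g K) :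
    L2norm μ g ≤ √(μ.real Set.univ) * supK K g := by
  have hbound : ∀ᵐ z ∂μ, ‖g z‖ ^ 2 ≤ supK K g ^ 2 := (ae_iff.mpr hsupp).mono fun z hz =>
    pow_le_pow_left₀ (norm_nonneg _) (norm_le_supK hK hg hz) 2
  calc L2norm μ g ≤ √(∫ _, supK K g ^ 2 ∂μ) := Real.sqrt_le_sqrt <|
        integral_mono_of_nonneg (ae_of_all _ fun z => by positivity) (integrable_const _) hbound
    _ = √(μ.real Set.univ) * supK K g := by
        rw [integral_const, smul_eq_mul, Real.sqrt_mul measureReal_nonneg,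
          Real.sqrt_sq (supK_nonneg K g)]

variable [BorelSpace (EuclideanSpace ℂ (Fin N))]

theorem memLp_of_continuousOn (hK : IsCompact K) (hsupp : μ Kᶜ = 0) (hg : ContinuousOn g K)
    (p : ENNReal) : MemLp g p μ := by
  have hμK : ∀ᵐ z ∂μ, z ∈ K := ae_iff.mpr hsupp
  have hmeas : AEStronglyMeasurable g μ := by
    simpa [Measure.restrict_eq_self_of_ae_mem hμK] using
      hg.aestronglyMeasurable (μ := μ) hK.measurableSet
  exact MemLp.of_bound hmeas (supK K g) (hμK.mono fun z hz => norm_le_supK hK hg hz)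

theorem L2norm_evalP_sub_le_two_mul (hK : IsCompact K) (hsupp : μ Kᶜ = 0)
    (hf : ContinuousOn f K) {p q : MvPolynomial (Fin N) ℂ}
    (hbest : L2norm μ (fun z => f z - evalP p z) ≤ L2norm μ (fun z => f z - evalP q z)) :
    L2norm μ (evalP (q - p)) ≤ 2 * L2norm μ (fun z => f z - evalP q z) := by
  have hsplit : evalP (q - p) = (fun z => f z - evalP p z) - (fun z => f z - evalP q z) := by
    ext z; simp
  have hmem : ∀ r : MvPolynomial (Fin N) ℂ, MemLp (fun z => f z - evalP r z) 2 μ := fun r =>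
    memLp_of_continuousOn hK hsupp (hf.sub (continuous_evalP r).continuousOn) 2
  rw [hsplit]
  linarith [L2norm_sub_le (hmem p) (hmem q)]

theorem supK_sub_evalP_le_mul_dnApprox (hK : IsCompact K) (hsupp : μ Kᶜ = 0)
    (hf : ContinuousOn f K) {M c : ℝ} (hM : 0 ≤ M) (hc : 1 ≤ c)
    (hBM : ∀ q : MvPolynomial (Fin N) ℂ,
      supK K (evalP q) ≤ M * c ^ q.totalDegree * L2norm μ (evalP q))
    {p : MvPolynomial (Fin N) ℂ} (hp : p.totalDegree ≤ n)
    (hbest : ∀ q : MvPolynomial (Fin N) ℂ, q.totalDegree ≤ n →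
      L2norm μ (fun z => f z - evalP p z) ≤ L2norm μ (fun z => f z - evalP q z)) :
    supK K (fun z => f z - evalP p z) ≤
      (1 + 2 * M * √(μ.real Set.univ)) * c ^ n * dnApprox K f n := by
  refine le_mul_dnApprox (by positivity) fun q hq => ?_
  set C := √(μ.real Set.univ)
  set S := supK K (fun z => f z - evalP q z)
  have hfq : ContinuousOn (fun z => f z - evalP q z) K := hf.sub (continuous_evalP q).continuousOn
  have hdeg : (q - p).totalDegree ≤ n :=
    (MvPolynomial.totalDegree_sub q p).trans (max_le hq hp)
  have hsplit : (fun z => f z - evalP p z) = fun z => (f z - evalP q z) + evalP (q - p) z := by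
    ext z; simp
  have hcn : 1 ≤ c ^ n := one_le_pow₀ hc
  have hS : 0 ≤ S := supK_nonneg K _
  calc supK K (fun z => f z - evalP p z) ≤ S + supK K (evalP (q - p)) :=
        hsplit ▸ supK_add_le hK hfq (continuous_evalP _).continuousOn
    _ ≤ S + M * c ^ n * L2norm μ (evalP (q - p)) := by
        gcongr
        exact (hBM _).trans <| mul_le_mul_of_nonneg_right
          (mul_le_mul_of_nonneg_left (pow_le_pow_right₀ hc hdeg) hM) (Real.sqrt_nonneg _)
    _ ≤ S + M * c ^ n * (2 * (C * S)) := by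
        gcongr
        exact (L2norm_evalP_sub_le_two_mul hK hsupp hf (hbest q hq)).trans
          (by gcongr; exact L2norm_le_sqrt_mul_supK hK hsupp hfq)
    _ ≤ (1 + 2 * M * C) * c ^ n * S := by linarith [le_mul_of_one_le_left hS hcn]

end PolynomialApproximation

theorem best_L2_approximants_general (N : ℕ)
    [MeasurableSpace (EuclideanSpace ℂ (Fin N))]
    [BorelSpace (EuclideanSpace ℂ (Fin N))]
    (K : Set (EuclideanSpace ℂ (Fin N))) (hK : IsCompact K)
    (μ : Measure (EuclideanSpace ℂ (Fin N))) [IsFiniteMeasure μ]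
    (hsupp : μ Kᶜ = 0)
    (hBM : ∀ ε : ℝ, 0 < ε → ∃ M : ℝ, 0 < M ∧
      ∀ p : MvPolynomial (Fin N) ℂ,
        supK K (evalP p) ≤ M * (1 + ε) ^ p.totalDegree * L2norm μ (evalP p))
    (f : EuclideanSpace ℂ (Fin N) → ℂ) (hf : ContinuousOn f K)
    (ρ : ℝ)
    (hd : limsup (fun n : ℕ => dnApprox K f n ^ ((n : ℝ)⁻¹)) atTop = ρ)
    (p : ℕ → MvPolynomial (Fin N) ℂ)
    (hpdeg : ∀ n, (p n).totalDegree ≤ n)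
    (hpbest : ∀ (n : ℕ) (q : MvPolynomial (Fin N) ℂ), q.totalDegree ≤ n →
      L2norm μ (fun z => f z - evalP (p n) z) ≤ L2norm μ (fun z => f z - evalP q z)) :
    limsup (fun n : ℕ =>
      supK K (fun z => f z - evalP (p n) z) ^ ((n : ℝ)⁻¹)) atTop = ρ := by
  rw [← hd]
  refine limsup_rpow_inv_eq_of_le_geometric (fun n => dnApprox_nonneg)
    (fun n => dnApprox_le f (hpdeg n)) ?_ fun c hc => ?_
  · exact ⟨max 1 (supK K f), eventually_map.mpr <| Eventually.of_forall fun n =>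
      rpow_natCast_inv_le_max_one dnApprox_nonneg dnApprox_le_supK n⟩
  · obtain ⟨M, hM, hBMc⟩ := hBM (c - 1) (by linarith)
    exact ⟨_, fun n => supK_sub_evalP_le_mul_dnApprox hK hsupp hf hM.le hc.le
      (by simpa using hBMc) (hpdeg n) (hpbest n)⟩

/-- **Uniform convergence of best `L²(μ)`-approximants.** Let `K ⊂ ℂ^N` be compact,
polynomially convex and `L`-regular, and let `μ` be a finite measure supported on `K`
with the Bernstein–Markov property. If `f ∈ C(K)` has `limsup d_n(f,K)^{1/n} = ρ < 1`
and `p_n` are best `L²(μ)` polynomial approximants of degree at most `n`, then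
`limsup ‖f - p_n‖_K^{1/n} = ρ`. -/
theorem best_L2_approximants (N : ℕ)
    [MeasurableSpace (EuclideanSpace ℂ (Fin N))]
    [BorelSpace (EuclideanSpace ℂ (Fin N))]
    (K : Set (EuclideanSpace ℂ (Fin N))) (hK : IsCompact K)
    (hpc : polyHull K = K) (hreg : Continuous (VK K))
    (μ : Measure (EuclideanSpace ℂ (Fin N))) [IsFiniteMeasure μ]
    (hsupp : μ Kᶜ = 0)
    (hBM : ∀ ε : ℝ, 0 < ε → ∃ M : ℝ, 0 < M ∧
      ∀ p : MvPolynomial (Fin N) ℂ,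
        supK K (evalP p) ≤ M * (1 + ε) ^ p.totalDegree * L2norm μ (evalP p))
    (f : EuclideanSpace ℂ (Fin N) → ℂ) (hf : ContinuousOn f K)
    (ρ : ℝ) (hρ : ρ < 1)
    (hd : limsup (fun n : ℕ => dnApprox K f n ^ ((n : ℝ)⁻¹)) atTop = ρ)
    (p : ℕ → MvPolynomial (Fin N) ℂ)
    (hpdeg : ∀ n, (p n).totalDegree ≤ n)
    (hpbest : ∀ (n : ℕ) (q : MvPolynomial (Fin N) ℂ), q.totalDegree ≤ n →
      L2norm μ (fun z => f z - evalP (p n) z) ≤ L2norm μ (fun z => f z - evalP q z)) :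
    limsup (fun n : ℕ =>
      supK K (fun z => f z - evalP (p n) z) ^ ((n : ℝ)⁻¹)) atTop = ρ :=
  best_L2_approximants_general N K hK μ hsupp hBM f hf ρ hd p hpdeg hpbest
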